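/- arXiv:2211.07092 — 2 statements merged into one kernel-verified Lean document; each statement's English description precedes it below -/
import Mathlib

section
/- Let M and M̂ be d×d stochastic matrices, 0 < α < 1, g ∈ R^d, and define V = (I - αM)^{-1}g and V̂ = (I - αM̂)^{-1}g. Then ||V - V̂||_∞ ≤ (α/(1-α)²)·sqrt(d)·||M̂ - M||_∞·||g||_1, where ||M̂ - M||_∞ denotes the maximum absolute row-sum matrix norm. -/
open Matrix
/-- The maximum absolute row-sum (infinity) norm of a real `d × d` matrix. -/
noncomputable def matInfNorm' {d : ℕ} (A : Matrix (Fin d) (Fin d) ℝ) : ℝ :=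
  ⨆ i : Fin d, ∑ j : Fin d, |A i j|

/-!
Measure vectors in the sup norm and matrices in the induced row-sum norm, in which a stochastic
matrix has norm at most `1`. Then `(1 - α) ‖x‖ ≤ ‖(1 - α P) x‖`, so `1 - α P` is invertible with
inverse of norm at most `1 / (1 - α)`, and the resolvent identity
`(1 - α M) (V - V̂) = α (M - M̂) V̂` gives `‖V - V̂‖ ≤ α / (1 - α)² ‖M̂ - M‖ ‖g‖_∞`.
The factor `√d` is slack: `‖g‖_∞ ≤ ‖g‖₁ ≤ √d ‖g‖₁`.
-/

attribute [local instance] Matrix.linftyOpNormedAddCommGroup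

section

variable {m n : Type*} [Fintype m] [Fintype n]

theorem iSup_abs_eq_norm (x : n → ℝ) : ⨆ i, |x i| = ‖x‖ :=
  le_antisymm (Real.iSup_le (fun i => norm_le_pi_norm x i) (norm_nonneg x))
    ((pi_norm_le_iff_of_nonneg (Real.iSup_nonneg fun i => abs_nonneg (x i))).2
      fun i => le_ciSup (f := fun i => |x i|) (Finite.bddAbove_range _) i)

theorem norm_le_sum_abs (x : n → ℝ) : ‖x‖ ≤ ∑ j, |x j| :=
  (pi_norm_le_iff_of_nonneg (by positivity)).2 fun i =>
    Finset.single_le_sum (f := fun j => |x j|) (fun j _ => abs_nonneg (x j)) (Finset.mem_univ i)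

theorem norm_le_sqrt_card_mul_sum_abs (x : n → ℝ) :
    ‖x‖ ≤ √(Fintype.card n) * ∑ j, |x j| := by
  cases isEmpty_or_nonempty n
  · simp [Subsingleton.elim x 0]
  · have : 1 ≤ √(Fintype.card n) := Real.one_le_sqrt.2 (mod_cast Fintype.card_pos)
    calc ‖x‖ ≤ ∑ j, |x j| := norm_le_sum_abs x
      _ ≤ √(Fintype.card n) * ∑ j, |x j| := le_mul_of_one_le_left (by positivity) this

theorem Matrix.linfty_opNorm_le_iff {A : Matrix m n ℝ} {r : ℝ} (hr : 0 ≤ r) :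
    ‖A‖ ≤ r ↔ ∀ i, ∑ j, |A i j| ≤ r := by
  change ‖fun i => WithLp.toLp 1 (A i)‖ ≤ r ↔ _
  simp [pi_norm_le_iff_of_nonneg hr, PiLp.norm_eq_of_L1]

end

theorem matInfNorm'_eq_norm {d : ℕ} (A : Matrix (Fin d) (Fin d) ℝ) : matInfNorm' A = ‖A‖ :=
  le_antisymm (Real.iSup_le ((linfty_opNorm_le_iff (norm_nonneg A)).1 le_rfl) (norm_nonneg A))
    ((linfty_opNorm_le_iff (Real.iSup_nonneg fun i => by positivity)).2
      fun i => le_ciSup (f := fun i => ∑ j, |A i j|) (Finite.bddAbove_range _) i)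

section

variable {n : Type*} [Fintype n] [DecidableEq n]

theorem Matrix.norm_le_one_of_mem_rowStochastic {M : Matrix n n ℝ}
    (hM : M ∈ rowStochastic ℝ n) : ‖M‖ ≤ 1 :=
  (linfty_opNorm_le_iff zero_le_one).2 fun i => by
    simp only [abs_of_nonneg (nonneg_of_mem_rowStochastic hM), sum_row_of_mem_rowStochastic hM i,
      le_refl]

theorem Matrix.one_sub_mul_norm_le_norm_one_sub_smul_mulVec {P : Matrix n n ℝ} (hP : ‖P‖ ≤ 1)
    {α : ℝ} (hα : 0 ≤ α) (x : n → ℝ) :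
    (1 - α) * ‖x‖ ≤ ‖(1 - α • P) *ᵥ x‖ := by
  have hPx : ‖α • (P *ᵥ x)‖ ≤ α * ‖x‖ := by
    rw [norm_smul, Real.norm_of_nonneg hα]
    exact mul_le_mul_of_nonneg_left
      ((linfty_opNorm_mulVec P x).trans (mul_le_of_le_one_left (norm_nonneg x) hP)) hα
  have hsplit : (1 - α • P) *ᵥ x + α • (P *ᵥ x) = x := by
    rw [sub_mulVec, one_mulVec, smul_mulVec, sub_add_cancel]
  have := hsplit ▸ norm_add_le ((1 - α • P) *ᵥ x) (α • (P *ᵥ x))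
  linarith

theorem Matrix.isUnit_det_one_sub_smul {P : Matrix n n ℝ} (hP : ‖P‖ ≤ 1) {α : ℝ} (hα0 : 0 ≤ α)
    (hα1 : α < 1) : IsUnit (1 - α • P).det := by
  rw [isUnit_iff_ne_zero, Ne, ← exists_mulVec_eq_zero_iff]
  rintro ⟨x, hx, hx0⟩
  have := one_sub_mul_norm_le_norm_one_sub_smul_mulVec hP hα0 x
  rw [hx0, norm_zero] at this
  exact hx (norm_le_zero_iff.1 (nonpos_of_mul_nonpos_right this (by linarith)))

theorem Matrix.norm_one_sub_smul_inv_mulVec_sub_le {P Q : Matrix n n ℝ} (hP : ‖P‖ ≤ 1)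
    (hQ : ‖Q‖ ≤ 1) {α : ℝ} (hα0 : 0 ≤ α) (hα1 : α < 1) (g : n → ℝ) :
    ‖(1 - α • P)⁻¹ *ᵥ g - (1 - α • Q)⁻¹ *ᵥ g‖ ≤ α / (1 - α) ^ 2 * ‖Q - P‖ * ‖g‖ := by
  set V := (1 - α • P)⁻¹ *ᵥ g
  set W := (1 - α • Q)⁻¹ *ᵥ g
  have hV : (1 - α • P) *ᵥ V = g := by
    rw [mulVec_mulVec, mul_nonsing_inv _ (isUnit_det_one_sub_smul hP hα0 hα1), one_mulVec]
  have hW : (1 - α • Q) *ᵥ W = g := by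
    rw [mulVec_mulVec, mul_nonsing_inv _ (isUnit_det_one_sub_smul hQ hα0 hα1), one_mulVec]
  have hresolvent : (1 - α • P) *ᵥ (V - W) = α • ((P - Q) *ᵥ W) := by
    rw [mulVec_sub, hV, ← hW, ← sub_mulVec, ← smul_mulVec]
    congr 1
    module
  have h1α : 0 < 1 - α := by linarith
  have hW_le : (1 - α) * ‖W‖ ≤ ‖g‖ := hW ▸ one_sub_mul_norm_le_norm_one_sub_smul_mulVec hQ hα0 W
  have hVW_le : (1 - α) * ‖V - W‖ ≤ α * (‖Q - P‖ * ‖W‖) := by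
    calc (1 - α) * ‖V - W‖ ≤ ‖α • ((P - Q) *ᵥ W)‖ :=
          hresolvent ▸ one_sub_mul_norm_le_norm_one_sub_smul_mulVec hP hα0 (V - W)
      _ ≤ α * (‖Q - P‖ * ‖W‖) := by
          rw [norm_smul, Real.norm_of_nonneg hα0, norm_sub_rev Q P]
          exact mul_le_mul_of_nonneg_left (linfty_opNorm_mulVec _ _) hα0
  rw [div_mul_eq_mul_div, div_mul_eq_mul_div, le_div_iff₀ (by positivity)]
  calc ‖V - W‖ * (1 - α) ^ 2 = (1 - α) * ((1 - α) * ‖V - W‖) := by ring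
    _ ≤ (1 - α) * (α * (‖Q - P‖ * ‖W‖)) := by gcongr
    _ = α * ‖Q - P‖ * ((1 - α) * ‖W‖) := by ring
    _ ≤ α * ‖Q - P‖ * ‖g‖ := by gcongr

end

/-- Value function perturbation bound: if `V = (I - αM)⁻¹ g` and
`V̂ = (I - αM̂)⁻¹ g` for stochastic matrices `M`, `M̂` and `0 < α < 1`, then
`‖V - V̂‖_∞ ≤ (α/(1-α)²)·√d·‖M̂ - M‖_∞·‖g‖₁`. -/
theorem stmt18 {d : ℕ} (M Mhat : Matrix (Fin d) (Fin d) ℝ)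
    (hMnn : ∀ i j, 0 ≤ M i j) (hMrow : ∀ i, ∑ j, M i j = 1)
    (hMhnn : ∀ i j, 0 ≤ Mhat i j) (hMhrow : ∀ i, ∑ j, Mhat i j = 1)
    (α : ℝ) (hα0 : 0 < α) (hα1 : α < 1) (g : Fin d → ℝ)
    (V Vhat : Fin d → ℝ)
    (hV : V = ((1 : Matrix (Fin d) (Fin d) ℝ) - α • M)⁻¹ *ᵥ g)
    (hVhat : Vhat = ((1 : Matrix (Fin d) (Fin d) ℝ) - α • Mhat)⁻¹ *ᵥ g) :
    (⨆ i : Fin d, |V i - Vhat i|)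
      ≤ (α / (1 - α) ^ 2) * Real.sqrt d * matInfNorm' (Mhat - M) * ∑ j, |g j| := by
  have hM := norm_le_one_of_mem_rowStochastic (mem_rowStochastic_iff_sum.2 ⟨hMnn, hMrow⟩)
  have hMhat := norm_le_one_of_mem_rowStochastic (mem_rowStochastic_iff_sum.2 ⟨hMhnn, hMhrow⟩)
  have hg : ‖g‖ ≤ √d * ∑ j, |g j| := by
    simpa using norm_le_sqrt_card_mul_sum_abs g
  rw [show (⨆ i, |V i - Vhat i|) = ‖V - Vhat‖ from iSup_abs_eq_norm (V - Vhat),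
    matInfNorm'_eq_norm, hV, hVhat]
  calc _ ≤ α / (1 - α) ^ 2 * ‖Mhat - M‖ * ‖g‖ :=
        norm_one_sub_smul_inv_mulVec_sub_le hM hMhat hα0.le hα1 g
    _ ≤ α / (1 - α) ^ 2 * ‖Mhat - M‖ * (√d * ∑ j, |g j|) := by gcongr
    _ = _ := by ring
end

section
/- Consider the (d+1)×(d+1) stochastic matrix M_σ whose first d rows are ((1-p⋆)/d,...,(1-p⋆)/d, p⋆) and whose last row is ((1-p⋆+16σ_1ε)/d, (1-p⋆-16σ_1ε)/d, ..., (1-p⋆+16σ_{d/2}ε)/d, (1-p⋆-16σ_{d/2}ε)/d, p⋆), for σ ∈ {-1,1}^{d/2}, 0 < p⋆ < 1/(d+1), 0 < ε < 1/32, d even. Then the vector π with entries π_t = ((1-p⋆)² + (1-p⋆+16σ_{⌈t/2⌉}ε)p⋆)/d for odd t ≤ d, π_t = ((1-p⋆)² + (1-p⋆-16σ_{⌈t/2⌉}ε)p⋆)/d for even t ≤ d, and π_{d+1} = p⋆, is a stationary distribution of M_σ: it is a probability vector and satisfies πM_σ = π. -/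
/-- The `(d+1) × (d+1)` transition matrix `M_σ` (with `d = 2k`): the first `d`
rows are `((1-p)/d, …, (1-p)/d, p)` and the last row is
`((1-p+16σ₁ε)/d, (1-p-16σ₁ε)/d, …, (1-p+16σ_{d/2}ε)/d, (1-p-16σ_{d/2}ε)/d, p)`. -/
noncomputable def Msig (k : ℕ) (p ε : ℝ) (σ : ℕ → ℝ) :
    Matrix (Fin (2 * k + 1)) (Fin (2 * k + 1)) ℝ := fun t u =>
  if u.val = 2 * k then p
  else if t.val = 2 * k then
    (1 - p + (if u.val % 2 = 0 then (1 : ℝ) else -1) * 16 * σ (u.val / 2) * ε)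
      / (2 * k)
  else (1 - p) / (2 * k)

/-- The candidate stationary vector: `π_t = ((1-p)² + (1-p±16σ_{⌈t/2⌉}ε)·p)/d`
for `t ≤ d` (sign by parity) and `π_{d+1} = p`. -/
noncomputable def piSig (k : ℕ) (p ε : ℝ) (σ : ℕ → ℝ) : Fin (2 * k + 1) → ℝ :=
  fun t =>
    if t.val = 2 * k then p
    else ((1 - p) ^ 2 +
        (1 - p + (if t.val % 2 = 0 then (1 : ℝ) else -1) * 16 * σ (t.val / 2) * ε) * p)
      / (2 * k)

lemma aux_signsum (k : ℕ) (σ : ℕ → ℝ) (ε : ℝ) :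
    ∑ i ∈ Finset.range (2 * k),
      (if i % 2 = 0 then (1 : ℝ) else -1) * 16 * σ (i / 2) * ε = 0 := by
  induction k with
  | zero => simp
  | succ k ih =>
    have h : 2 * (k + 1) = (2 * k + 1) + 1 := by omega
    rw [h, Finset.sum_range_succ, Finset.sum_range_succ, ih]
    have h1 : (2 * k) % 2 = 0 := by omega
    have h2 : (2 * k + 1) % 2 = 1 := by omega
    have h3 : (2 * k) / 2 = k := by omega
    have h4 : (2 * k + 1) / 2 = k := by omega
    rw [h1, h2, h3, h4]
    norm_num

lemma aux_partial (k : ℕ) (hk : 0 < k) (p ε : ℝ) (σ : ℕ → ℝ) :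
    ∑ i : Fin (2 * k), piSig k p ε σ (Fin.castSucc i) = 1 - p := by
  have hD : (2 * (k:ℝ)) ≠ 0 := by positivity
  have step : ∀ i : Fin (2 * k), piSig k p ε σ (Fin.castSucc i)
      = ((1 - p) ^ 2 + (1 - p) * p) / (2 * k)
        + (if i.val % 2 = 0 then (1 : ℝ) else -1) * 16 * σ (i.val / 2) * ε * (p / (2 * k)) := by
    intro i
    have hne : (i : ℕ) ≠ 2 * k := Nat.ne_of_lt i.isLt
    simp only [piSig, Fin.coe_castSucc, if_neg hne]
    ring
  rw [Finset.sum_congr rfl (fun i _ => step i), Finset.sum_add_distrib,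
    Finset.sum_const, ← Finset.sum_mul]
  rw [show (∑ i : Fin (2 * k), (if i.val % 2 = 0 then (1 : ℝ) else -1) * 16 * σ (i.val / 2) * ε)
      = ∑ i ∈ Finset.range (2 * k), (if i % 2 = 0 then (1 : ℝ) else -1) * 16 * σ (i / 2) * ε
    from Fin.sum_univ_eq_sum_range (fun i => (if i % 2 = 0 then (1 : ℝ) else -1) * 16 * σ (i / 2) * ε) (2 * k)]
  rw [aux_signsum, zero_mul, add_zero, Finset.card_univ, Fintype.card_fin, nsmul_eq_mul]
  push_cast
  field_simp
  ring

/-- For `σ ∈ {-1,1}^{d/2}`, `0 < p < 1/(d+1)` and `0 < ε < 1/32` (`d = 2k`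
even), the vector `piSig` is a stationary distribution of `Msig`: it is a
probability vector and satisfies `π M_σ = π`. -/
theorem stmt19 (k : ℕ) (hk : 0 < k) (p ε : ℝ)
    (hp0 : 0 < p) (hp1 : p < 1 / (2 * k + 1)) (hε0 : 0 < ε) (hε1 : ε < 1 / 32)
    (σ : ℕ → ℝ) (hσ : ∀ j < k, σ j = 1 ∨ σ j = -1) :
    (∀ t, 0 ≤ piSig k p ε σ t) ∧
      (∑ t, piSig k p ε σ t = 1) ∧
      ∀ u, ∑ t, piSig k p ε σ t * Msig k p ε σ t u = piSig k p ε σ u := by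
  have hk1 : (1 : ℝ) ≤ (k : ℝ) := by exact_mod_cast hk
  have hD : (0 : ℝ) < 2 * (k : ℝ) := by linarith
  have hp3 : p < 1 / 3 := by
    have h3 : (3 : ℝ) ≤ 2 * (k : ℝ) + 1 := by linarith
    have := one_div_le_one_div_of_le (by norm_num) h3
    linarith
  -- total sum
  have hsumall : ∑ t, piSig k p ε σ t = 1 := by
    rw [Fin.sum_univ_castSucc, aux_partial k hk p ε σ]
    have : piSig k p ε σ (Fin.last (2 * k)) = p := by
      simp [piSig, Fin.val_last]
    rw [this]; ring
  refine ⟨?_, hsumall, ?_⟩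
  · intro t
    by_cases ht : t.val = 2 * k
    · simp [piSig, ht]; linarith
    · have htlt : t.val < 2 * k := lt_of_le_of_ne (Nat.lt_succ_iff.mp t.isLt) ht
      have hj : t.val / 2 < k := by omega
      rcases hσ _ hj with hs | hs <;>
        · simp only [piSig, if_neg ht, hs]
          by_cases hpar : t.val % 2 = 0 <;>
            · simp only [hpar, if_true, if_neg]
              all_goals try simp [hpar]
              apply div_nonneg _ (by linarith)
              nlinarith [sq_nonneg (1 - p)]
  · intro u
    by_cases hu : u.val = 2 * k
    · have hM : ∀ t, Msig k p ε σ t u = p := fun t => by simp [Msig, hu]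
      calc ∑ t, piSig k p ε σ t * Msig k p ε σ t u
          = ∑ t, piSig k p ε σ t * p := by
            exact Finset.sum_congr rfl fun t _ => by rw [hM t]
        _ = (∑ t, piSig k p ε σ t) * p := by rw [Finset.sum_mul]
        _ = p := by rw [hsumall, one_mul]
        _ = piSig k p ε σ u := by simp [piSig, hu]
    · rw [Fin.sum_univ_castSucc]
      have h1 : ∀ i : Fin (2 * k),
          piSig k p ε σ (Fin.castSucc i) * Msig k p ε σ (Fin.castSucc i) u
          = piSig k p ε σ (Fin.castSucc i) * ((1 - p) / (2 * k)) := by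
        intro i
        have hne : (i : ℕ) ≠ 2 * k := Nat.ne_of_lt i.isLt
        simp [Msig, hu, hne]
      rw [Finset.sum_congr rfl (fun i _ => h1 i), ← Finset.sum_mul,
        aux_partial k hk p ε σ]
      have h2 : piSig k p ε σ (Fin.last (2 * k)) = p := by simp [piSig]
      have h3 : Msig k p ε σ (Fin.last (2 * k)) u
          = (1 - p + (if u.val % 2 = 0 then (1 : ℝ) else -1) * 16 * σ (u.val / 2) * ε)
            / (2 * k) := by
        simp [Msig, hu, Fin.val_last]
      rw [h2, h3]
      simp only [piSig, if_neg hu]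
      ring
end
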